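/- Let k be an algebraically closed field of characteristic p and A ⊆ C an inclusion of commutative k-algebras such that every c ∈ C satisfies c^{p^n} ∈ A for some n ≥ 0 and such that C is integral over A. Then every k-algebra homomorphism A → k extends to a k-algebra homomorphism C → k; consequently restriction Var(C) → Var(A) is a bijection. -/
import Mathlib


/-- Let `k` be an algebraically closed field of characteristic `p` and `A ⊆ C` an
inclusion of commutative `k`-algebras which is an F-isomorphism (every `c ∈ C` has
`c ^ p ^ n ∈ A` for some `n`) and with `C` integral over `A`.  Then restriction
`Var(C) → Var(A)` of `k`-algebra homomorphisms to `k` is a bijection; in particular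
every `k`-algebra homomorphism `A → k` extends to `C`. -/
theorem F_isomorphism_integral_var_bijective
    (k : Type*) [Field k] [IsAlgClosed k] (p : ℕ) [hp : Fact p.Prime] [CharP k p]
    (C : Type*) [CommRing C] [Algebra k C]
    (A : Subalgebra k C)
    (hF : ∀ c : C, ∃ n : ℕ, c ^ p ^ n ∈ A)
    (hint : Algebra.IsIntegral A C) :
    Function.Bijective (fun φ : C →ₐ[k] k => φ.comp A.val) := by
  constructor
  · -- injectivity from the F-isomorphism condition
    intro φ ψ h
    ext c
    obtain ⟨n, hn⟩ := hF c
    have hfrob : Function.Injective (iterateFrobenius k p n) :=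
      (iterateFrobenius k p n).injective
    apply hfrob
    simp only [iterateFrobenius_def]
    rw [← map_pow, ← map_pow]
    have := congrArg (fun f : A →ₐ[k] k => f ⟨c ^ p ^ n, hn⟩) h
    simpa using this
  · -- surjectivity: every hom `A → k` extends to `C`
    intro φ
    have hφsurj : Function.Surjective φ := fun x =>
      ⟨algebraMap k A x, by simp⟩
    haveI hm : (RingHom.ker φ.toRingHom).IsMaximal :=
      RingHom.ker_isMaximal_of_surjective _ hφsurj
    have hker : RingHom.ker (algebraMap A C) ≤ RingHom.ker φ.toRingHom := by
      intro a ha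
      have : (a : C) = 0 := ha
      have : a = 0 := Subtype.ext this
      simp [this, RingHom.mem_ker]
    obtain ⟨q, hq, hcomap⟩ :=
      Ideal.exists_ideal_over_maximal_of_isIntegral (S := C)
        (RingHom.ker φ.toRingHom) hker
    haveI := hq
    letI : Field (C ⧸ q) := Ideal.Quotient.field q
    let π : C →ₐ[k] C ⧸ q := Ideal.Quotient.mkₐ k q
    -- key: π ∘ (algebraMap A C) = (algebraMap k (C⧸q)) ∘ φ
    have hkey : ∀ a : A, π (a : C) = algebraMap k (C ⧸ q) (φ a) := by
      intro a
      have hmem : (a : C) - algebraMap k C (φ a) ∈ q := by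
        have : (a - algebraMap k A (φ a)) ∈ RingHom.ker φ.toRingHom := by
          simp [RingHom.mem_ker]
        rw [← hcomap] at this
        have h2 : algebraMap A C (a - algebraMap k A (φ a)) ∈ q := this
        simpa [Subalgebra.algebraMap_eq] using h2
      have := Ideal.Quotient.eq.mpr hmem
      simpa [π, Ideal.Quotient.mkₐ_eq_mk] using this
    -- the quotient is integral (hence algebraic) over k
    haveI : Algebra.IsIntegral k (C ⧸ q) := by
      constructor
      intro x
      obtain ⟨c, rfl⟩ := Ideal.Quotient.mk_surjective x
      obtain ⟨P, hPmonic, hPeval⟩ := hint.isIntegral c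
      refine ⟨P.map φ.toRingHom, hPmonic.map _, ?_⟩
      have : Polynomial.eval₂ ((algebraMap k (C ⧸ q)).comp φ.toRingHom)
          (Ideal.Quotient.mk q c) P = 0 := by
        have hcomp : (algebraMap k (C ⧸ q)).comp φ.toRingHom
            = (Ideal.Quotient.mk q).comp (algebraMap A C) := by
          ext a
          exact (hkey a).symm
        rw [hcomp, ← Polynomial.hom_eval₂]
        have : Polynomial.eval₂ (algebraMap A C) c P = 0 := hPeval
        rw [this, map_zero]
      simpa [Polynomial.eval₂_map] using this
    haveI : Algebra.IsAlgebraic k (C ⧸ q) := Algebra.IsIntegral.isAlgebraic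
    let L : (C ⧸ q) →ₐ[k] k := IsAlgClosed.lift
    refine ⟨L.comp π, ?_⟩
    ext a
    simp only [AlgHom.comp_apply, Subalgebra.coe_val]
    rw [hkey a]
    simp
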